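/- Let ω be a primitive cube root of unity in ℂ. The subgroup H = {M ∈ G(ω) : det M = 1} is isomorphic to SL(2, 𝔽₃) (the binary tetrahedral group); in particular H has order 24. -/
import Mathlib

noncomputable def Rmat (ζ : ℂ) : Matrix (Fin 2) (Fin 2) ℂ := !![ζ, 1; 0, 1]

noncomputable def Smat (ζ : ℂ) : Matrix (Fin 2) (Fin 2) ℂ := !![0, -ζ⁻¹; 1, 0]

noncomputable def G (ζ : ℂ) : Subgroup (Matrix.GeneralLinearGroup (Fin 2) ℂ) :=
  Subgroup.closure {A : Matrix.GeneralLinearGroup (Fin 2) ℂ |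
    (A : Matrix (Fin 2) (Fin 2) ℂ) = Rmat ζ ∨ (A : Matrix (Fin 2) (Fin 2) ℂ) = Smat ζ}

/-- The subgroup of `GL(2, ℂ)` consisting of matrices of determinant `1`. -/
noncomputable def detOne : Subgroup (Matrix.GeneralLinearGroup (Fin 2) ℂ) where
  carrier := {M | (M : Matrix (Fin 2) (Fin 2) ℂ).det = 1}
  one_mem' := by simp
  mul_mem' := by
    intro a b ha hb
    simp only [Set.mem_setOf_eq, Units.val_mul, Matrix.det_mul] at *
    rw [ha, hb, one_mul]
  inv_mem' := by
    intro a ha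
    simp only [Set.mem_setOf_eq] at *
    have h : ((a⁻¹ : (Matrix (Fin 2) (Fin 2) ℂ)ˣ) : Matrix (Fin 2) (Fin 2) ℂ).det *
        ((a : Matrix (Fin 2) (Fin 2) ℂ)).det = 1 := by
      rw [← Matrix.det_mul, ← Units.val_mul, inv_mul_cancel, Units.val_one, Matrix.det_one]
    rw [ha, mul_one] at h
    exact h

/-! ### The Eisenstein integers -/

structure Eis where
  a : ℤ
  b : ℤ
deriving DecidableEq

namespace Eis

@[ext] theorem ext' {x y : Eis} (h1 : x.a = y.a) (h2 : x.b = y.b) : x = y := by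
  cases x; cases y; simp_all

instance : Zero Eis := ⟨⟨0,0⟩⟩
instance : One Eis := ⟨⟨1,0⟩⟩
instance : Add Eis := ⟨fun x y => ⟨x.a + y.a, x.b + y.b⟩⟩
instance : Neg Eis := ⟨fun x => ⟨-x.a, -x.b⟩⟩
instance : Mul Eis := ⟨fun x y => ⟨x.a*y.a - x.b*y.b, x.a*y.b + x.b*y.a - x.b*y.b⟩⟩

@[simp] theorem zero_a : (0 : Eis).a = 0 := rfl
@[simp] theorem zero_b : (0 : Eis).b = 0 := rfl
@[simp] theorem one_a : (1 : Eis).a = 1 := rfl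
@[simp] theorem one_b : (1 : Eis).b = 0 := rfl
@[simp] theorem add_a (x y : Eis) : (x + y).a = x.a + y.a := rfl
@[simp] theorem add_b (x y : Eis) : (x + y).b = x.b + y.b := rfl
@[simp] theorem neg_a (x : Eis) : (-x).a = -x.a := rfl
@[simp] theorem neg_b (x : Eis) : (-x).b = -x.b := rfl
@[simp] theorem mul_a (x y : Eis) : (x * y).a = x.a*y.a - x.b*y.b := rfl
@[simp] theorem mul_b (x y : Eis) : (x * y).b = x.a*y.b + x.b*y.a - x.b*y.b := rfl

instance : CommRing Eis where
  add_assoc := by intros; ext <;> simp <;> ring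
  zero_add := by intros; ext <;> simp
  add_zero := by intros; ext <;> simp
  add_comm := by intros; ext <;> simp <;> ring
  mul_assoc := by intros; ext <;> simp <;> ring
  one_mul := by intros; ext <;> simp
  mul_one := by intros; ext <;> simp
  left_distrib := by intros; ext <;> simp <;> ring
  right_distrib := by intros; ext <;> simp <;> ring
  mul_comm := by intros; ext <;> simp <;> ring
  neg_add_cancel := by intros; ext <;> simp
  zero_mul := by intros; ext <;> simp
  mul_zero := by intros; ext <;> simp
  nsmul := nsmulRec
  zsmul := zsmulRec

end Eis

abbrev Mat2 := Matrix (Fin 2) (Fin 2) Eis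
abbrev Mu := Mat2ˣ

def w : Eis := ⟨0,1⟩

def RA : Mu := ⟨!![w,1;0,1], !![(⟨-1,-1⟩:Eis),(⟨1,1⟩:Eis);0,1], by decide, by decide⟩
def SA : Mu := ⟨!![0,(⟨1,1⟩:Eis);1,0], !![0,1;(⟨0,-1⟩:Eis),0], by decide, by decide⟩

def u0 : Mu := ⟨!![(⟨1,0⟩:Eis),(⟨0,0⟩:Eis);(⟨0,0⟩:Eis),(⟨1,0⟩:Eis)], !![(⟨1,0⟩:Eis),(⟨0,0⟩:Eis);(⟨0,0⟩:Eis),(⟨1,0⟩:Eis)], by decide, by decide⟩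
def u1 : Mu := ⟨!![(⟨1,0⟩:Eis),(⟨-1,0⟩:Eis);(⟨1,0⟩:Eis),(⟨0,0⟩:Eis)], !![(⟨0,0⟩:Eis),(⟨1,0⟩:Eis);(⟨-1,0⟩:Eis),(⟨1,0⟩:Eis)], by decide, by decide⟩
def u2 : Mu := ⟨!![(⟨0,0⟩:Eis),(⟨1,1⟩:Eis);(⟨0,1⟩:Eis),(⟨1,0⟩:Eis)], !![(⟨1,0⟩:Eis),(⟨-1,-1⟩:Eis);(⟨0,-1⟩:Eis),(⟨0,0⟩:Eis)], by decide, by decide⟩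
def u3 : Mu := ⟨!![(⟨1,0⟩:Eis),(⟨-1,-1⟩:Eis);(⟨0,-1⟩:Eis),(⟨0,0⟩:Eis)], !![(⟨0,0⟩:Eis),(⟨1,1⟩:Eis);(⟨0,1⟩:Eis),(⟨1,0⟩:Eis)], by decide, by decide⟩
def u4 : Mu := ⟨!![(⟨0,0⟩:Eis),(⟨1,0⟩:Eis);(⟨-1,0⟩:Eis),(⟨1,0⟩:Eis)], !![(⟨1,0⟩:Eis),(⟨-1,0⟩:Eis);(⟨1,0⟩:Eis),(⟨0,0⟩:Eis)], by decide, by decide⟩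
def u5 : Mu := ⟨!![(⟨1,1⟩:Eis),(⟨0,0⟩:Eis);(⟨1,1⟩:Eis),(⟨0,-1⟩:Eis)], !![(⟨0,-1⟩:Eis),(⟨0,0⟩:Eis);(⟨-1,-1⟩:Eis),(⟨1,1⟩:Eis)], by decide, by decide⟩
def u6 : Mu := ⟨!![(⟨1,1⟩:Eis),(⟨0,-1⟩:Eis);(⟨0,0⟩:Eis),(⟨0,-1⟩:Eis)], !![(⟨0,-1⟩:Eis),(⟨0,1⟩:Eis);(⟨0,0⟩:Eis),(⟨1,1⟩:Eis)], by decide, by decide⟩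
def u7 : Mu := ⟨!![(⟨0,0⟩:Eis),(⟨0,1⟩:Eis);(⟨1,1⟩:Eis),(⟨0,0⟩:Eis)], !![(⟨0,0⟩:Eis),(⟨0,-1⟩:Eis);(⟨-1,-1⟩:Eis),(⟨0,0⟩:Eis)], by decide, by decide⟩
def u8 : Mu := ⟨!![(⟨0,-1⟩:Eis),(⟨0,1⟩:Eis);(⟨0,0⟩:Eis),(⟨1,1⟩:Eis)], !![(⟨1,1⟩:Eis),(⟨0,-1⟩:Eis);(⟨0,0⟩:Eis),(⟨0,-1⟩:Eis)], by decide, by decide⟩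
def u9 : Mu := ⟨!![(⟨0,-1⟩:Eis),(⟨0,0⟩:Eis);(⟨-1,-1⟩:Eis),(⟨1,1⟩:Eis)], !![(⟨1,1⟩:Eis),(⟨0,0⟩:Eis);(⟨1,1⟩:Eis),(⟨0,-1⟩:Eis)], by decide, by decide⟩
def u10 : Mu := ⟨!![(⟨0,0⟩:Eis),(⟨0,-1⟩:Eis);(⟨-1,-1⟩:Eis),(⟨0,0⟩:Eis)], !![(⟨0,0⟩:Eis),(⟨0,1⟩:Eis);(⟨1,1⟩:Eis),(⟨0,0⟩:Eis)], by decide, by decide⟩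
def u11 : Mu := ⟨!![(⟨0,0⟩:Eis),(⟨-1,0⟩:Eis);(⟨1,0⟩:Eis),(⟨-1,0⟩:Eis)], !![(⟨-1,0⟩:Eis),(⟨1,0⟩:Eis);(⟨-1,0⟩:Eis),(⟨0,0⟩:Eis)], by decide, by decide⟩
def u12 : Mu := ⟨!![(⟨1,1⟩:Eis),(⟨-1,-1⟩:Eis);(⟨1,0⟩:Eis),(⟨-1,-1⟩:Eis)], !![(⟨-1,-1⟩:Eis),(⟨1,1⟩:Eis);(⟨-1,0⟩:Eis),(⟨1,1⟩:Eis)], by decide, by decide⟩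
def u13 : Mu := ⟨!![(⟨-1,0⟩:Eis),(⟨1,1⟩:Eis);(⟨0,1⟩:Eis),(⟨0,0⟩:Eis)], !![(⟨0,0⟩:Eis),(⟨-1,-1⟩:Eis);(⟨0,-1⟩:Eis),(⟨-1,0⟩:Eis)], by decide, by decide⟩
def u14 : Mu := ⟨!![(⟨-1,-1⟩:Eis),(⟨1,1⟩:Eis);(⟨-1,0⟩:Eis),(⟨1,1⟩:Eis)], !![(⟨1,1⟩:Eis),(⟨-1,-1⟩:Eis);(⟨1,0⟩:Eis),(⟨-1,-1⟩:Eis)], by decide, by decide⟩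
def u15 : Mu := ⟨!![(⟨0,1⟩:Eis),(⟨1,0⟩:Eis);(⟨0,1⟩:Eis),(⟨0,-1⟩:Eis)], !![(⟨0,-1⟩:Eis),(⟨-1,0⟩:Eis);(⟨0,-1⟩:Eis),(⟨0,1⟩:Eis)], by decide, by decide⟩
def u16 : Mu := ⟨!![(⟨0,-1⟩:Eis),(⟨-1,0⟩:Eis);(⟨0,-1⟩:Eis),(⟨0,1⟩:Eis)], !![(⟨0,1⟩:Eis),(⟨1,0⟩:Eis);(⟨0,1⟩:Eis),(⟨0,-1⟩:Eis)], by decide, by decide⟩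
def u17 : Mu := ⟨!![(⟨0,0⟩:Eis),(⟨-1,-1⟩:Eis);(⟨0,-1⟩:Eis),(⟨-1,0⟩:Eis)], !![(⟨-1,0⟩:Eis),(⟨1,1⟩:Eis);(⟨0,1⟩:Eis),(⟨0,0⟩:Eis)], by decide, by decide⟩
def u18 : Mu := ⟨!![(⟨-1,0⟩:Eis),(⟨1,0⟩:Eis);(⟨-1,0⟩:Eis),(⟨0,0⟩:Eis)], !![(⟨0,0⟩:Eis),(⟨-1,0⟩:Eis);(⟨1,0⟩:Eis),(⟨-1,0⟩:Eis)], by decide, by decide⟩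
def u19 : Mu := ⟨!![(⟨-1,-1⟩:Eis),(⟨0,1⟩:Eis);(⟨0,0⟩:Eis),(⟨0,1⟩:Eis)], !![(⟨0,1⟩:Eis),(⟨0,-1⟩:Eis);(⟨0,0⟩:Eis),(⟨-1,-1⟩:Eis)], by decide, by decide⟩
def u20 : Mu := ⟨!![(⟨0,1⟩:Eis),(⟨0,0⟩:Eis);(⟨1,1⟩:Eis),(⟨-1,-1⟩:Eis)], !![(⟨-1,-1⟩:Eis),(⟨0,0⟩:Eis);(⟨-1,-1⟩:Eis),(⟨0,1⟩:Eis)], by decide, by decide⟩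
def u21 : Mu := ⟨!![(⟨-1,-1⟩:Eis),(⟨0,0⟩:Eis);(⟨-1,-1⟩:Eis),(⟨0,1⟩:Eis)], !![(⟨0,1⟩:Eis),(⟨0,0⟩:Eis);(⟨1,1⟩:Eis),(⟨-1,-1⟩:Eis)], by decide, by decide⟩
def u22 : Mu := ⟨!![(⟨0,1⟩:Eis),(⟨0,-1⟩:Eis);(⟨0,0⟩:Eis),(⟨-1,-1⟩:Eis)], !![(⟨-1,-1⟩:Eis),(⟨0,1⟩:Eis);(⟨0,0⟩:Eis),(⟨0,1⟩:Eis)], by decide, by decide⟩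
def u23 : Mu := ⟨!![(⟨-1,0⟩:Eis),(⟨0,0⟩:Eis);(⟨0,0⟩:Eis),(⟨-1,0⟩:Eis)], !![(⟨-1,0⟩:Eis),(⟨0,0⟩:Eis);(⟨0,0⟩:Eis),(⟨-1,0⟩:Eis)], by decide, by decide⟩

def S0 : Finset Mu := ⟨Multiset.ofList [u0, u1, u2, u3, u4, u5, u6, u7, u8, u9, u10, u11, u12, u13, u14, u15, u16, u17, u18, u19, u20, u21, u22, u23], by decide⟩

/-! ### reduction mod (1-w) -/

def red : Eis → ZMod 3 := fun x => ((x.a + x.b : ℤ) : ZMod 3)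

def pi3 : Eis →+* ZMod 3 where
  toFun := red
  map_one' := by decide
  map_zero' := by decide
  map_add' := by intro x y; simp only [red, Eis.add_a, Eis.add_b]; push_cast; ring
  map_mul' := by
    intro x y
    simp only [red, Eis.mul_a, Eis.mul_b]
    have h3 : (3 : ZMod 3) = 0 := rfl
    push_cast
    linear_combination (-(x.b : ZMod 3) * (y.b : ZMod 3)) * h3

theorem pi3_eq : ⇑pi3 = red := rfl

/-! ### decidable facts about S0 -/
set_option maxHeartbeats 2000000
set_option maxRecDepth 10000

theorem S0_one : (1 : Mu) ∈ S0 := by decide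
theorem S0_mul : ∀ a ∈ S0, ∀ b ∈ S0, a * b ∈ S0 := by decide
theorem S0_inv : ∀ a ∈ S0, a⁻¹ ∈ S0 := by decide
theorem S0_conj : ∀ a ∈ S0, RA * a * RA⁻¹ ∈ S0 := by decide
theorem S0_r3 : RA * (RA * RA) ∈ S0 := by decide
theorem S0_det : ∀ a ∈ S0, (a : Mat2) 0 0 * (a : Mat2) 1 1 - (a : Mat2) 0 1 * (a : Mat2) 1 0 = 1 := by
  decide
theorem S0_red_inj : ∀ a ∈ S0, ∀ b ∈ S0,
    (a : Mat2).map red = (b : Mat2).map red → a = b := by decide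
theorem S0_red_surj : ∀ f : Fin 2 → Fin 2 → ZMod 3,
    f 0 0 * f 1 1 - f 0 1 * f 1 0 = 1 →
    ∃ a ∈ S0, (a : Mat2).map red = Matrix.of f := by decide
theorem S0_card : S0.card = 24 := by decide

theorem S0_det' : ∀ a ∈ S0, ((a : Mu) : Mat2).det = 1 := by
  intro a ha; rw [Matrix.det_fin_two]; exact S0_det a ha

theorem detRA : ((RA : Mu) : Mat2).det = w := by
  rw [Matrix.det_fin_two]; decide

/-! ### the subgroup H0 -/

def H0sub : Subgroup Mu where
  carrier := {x | x ∈ S0}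
  one_mem' := S0_one
  mul_mem' := fun {a b} ha hb => S0_mul a ha b hb
  inv_mem' := fun {a} ha => S0_inv a ha

theorem mem_H0sub {x : Mu} : x ∈ H0sub ↔ x ∈ S0 := Iff.rfl

/-! ### triple coset union -/

theorem triple_coset {Γ : Type*} [Group Γ] (H : Subgroup Γ) (r : Γ)
    (hr3 : r * (r * r) ∈ H) (hc : ∀ h ∈ H, r * h * r⁻¹ ∈ H) :
    ∃ K : Subgroup Γ, ∀ x : Γ,
      (x ∈ K ↔ ∃ h ∈ H, x = h ∨ x = r * h ∨ x = r * (r * h)) := by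
  have hc' : ∀ h ∈ H, r⁻¹ * h * r ∈ H := by
    intro h hh
    have h1 : (r*(r*r))⁻¹ * h * (r*(r*r)) ∈ H :=
      H.mul_mem (H.mul_mem (H.inv_mem hr3) hh) hr3
    have h2 := hc _ (hc _ h1)
    have he : r * (r * ((r*(r*r))⁻¹ * h * (r*(r*r))) * r⁻¹) * r⁻¹ = r⁻¹ * h * r := by
      group
    rwa [he] at h2
  refine ⟨{ carrier := {x | ∃ h ∈ H, x = h ∨ x = r * h ∨ x = r * (r * h)}
            one_mem' := ⟨1, H.one_mem, Or.inl rfl⟩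
            mul_mem' := ?_
            inv_mem' := ?_ }, fun x => Iff.rfl⟩
  · rintro x y ⟨a, ha, hxe⟩ ⟨b, hb, hye⟩
    rcases hxe with hxe | hxe | hxe <;> rcases hye with hye | hye | hye
    · exact ⟨a * b, H.mul_mem ha hb, Or.inl (by rw [hxe, hye])⟩
    · exact ⟨(r⁻¹ * a * r) * b, H.mul_mem (hc' a ha) hb,
        Or.inr (Or.inl (by rw [hxe, hye]; group <;> try rw [zpow_two]))⟩
    · exact ⟨(r⁻¹ * (r⁻¹ * a * r) * r) * b, H.mul_mem (hc' _ (hc' a ha)) hb,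
        Or.inr (Or.inr (by rw [hxe, hye]; group <;> try rw [zpow_two]))⟩
    · exact ⟨a * b, H.mul_mem ha hb, Or.inr (Or.inl (by rw [hxe, hye]; group <;> try rw [zpow_two]))⟩
    · exact ⟨(r⁻¹ * a * r) * b, H.mul_mem (hc' a ha) hb,
        Or.inr (Or.inr (by rw [hxe, hye]; group <;> try rw [zpow_two]))⟩
    · exact ⟨(r*(r*r)) * ((r⁻¹ * (r⁻¹ * a * r) * r) * b),
        H.mul_mem hr3 (H.mul_mem (hc' _ (hc' a ha)) hb), Or.inl (by rw [hxe, hye]; group <;> try rw [zpow_two])⟩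
    · exact ⟨a * b, H.mul_mem ha hb, Or.inr (Or.inr (by rw [hxe, hye]; group <;> try rw [zpow_two]))⟩
    · exact ⟨(r*(r*r)) * ((r⁻¹ * a * r) * b),
        H.mul_mem hr3 (H.mul_mem (hc' a ha) hb), Or.inl (by rw [hxe, hye]; group <;> try rw [zpow_two])⟩
    · exact ⟨(r*(r*r)) * ((r⁻¹ * (r⁻¹ * a * r) * r) * b),
        H.mul_mem hr3 (H.mul_mem (hc' _ (hc' a ha)) hb),
        Or.inr (Or.inl (by rw [hxe, hye]; group <;> try rw [zpow_two]))⟩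
  · rintro x ⟨a, ha, hxe⟩
    rcases hxe with hxe | hxe | hxe
    · exact ⟨a⁻¹, H.inv_mem ha, Or.inl (by rw [hxe])⟩
    · exact ⟨(r*(r*r))⁻¹ * (r * a⁻¹ * r⁻¹),
        H.mul_mem (H.inv_mem hr3) (hc _ (H.inv_mem ha)),
        Or.inr (Or.inr (by rw [hxe]; group <;> try rw [zpow_two]))⟩
    · exact ⟨(r*(r*r))⁻¹ * (r * (r * a⁻¹ * r⁻¹) * r⁻¹),
        H.mul_mem (H.inv_mem hr3) (hc _ (hc _ (H.inv_mem ha))),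
        Or.inr (Or.inl (by rw [hxe]; group <;> try rw [zpow_two]))⟩

/-! ### the group GA over Eis -/

def GA : Subgroup Mu := Subgroup.closure {RA, SA}

theorem hRA : RA ∈ GA := Subgroup.subset_closure (Set.mem_insert _ _)
theorem hSA : SA ∈ GA := Subgroup.subset_closure (Set.mem_insert_of_mem _ rfl)

theorem H0_le_GA : H0sub ≤ GA := by
  intro x hx
  rw [mem_H0sub] at hx
  fin_cases hx
  · have h : u0 = 1 := Units.ext (by decide)
    exact h ▸ one_mem GA
  · have h : u1 = (RA * SA) := Units.ext (by decide)
    exact h ▸ (mul_mem hRA hSA)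
  · have h : u2 = (SA * RA) := Units.ext (by decide)
    exact h ▸ (mul_mem hSA hRA)
  · have h : u3 = (RA⁻¹ * SA⁻¹) := Units.ext (by decide)
    exact h ▸ (mul_mem (inv_mem hRA) (inv_mem hSA))
  · have h : u4 = (SA⁻¹ * RA⁻¹) := Units.ext (by decide)
    exact h ▸ (mul_mem (inv_mem hSA) (inv_mem hRA))
  · have h : u5 = ((RA * SA⁻¹) * RA) := Units.ext (by decide)
    exact h ▸ (mul_mem (mul_mem hRA (inv_mem hSA)) hRA)
  · have h : u6 = ((RA * SA⁻¹) * SA⁻¹) := Units.ext (by decide)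
    exact h ▸ (mul_mem (mul_mem hRA (inv_mem hSA)) (inv_mem hSA))
  · have h : u7 = ((SA * SA) * SA) := Units.ext (by decide)
    exact h ▸ (mul_mem (mul_mem hSA hSA) hSA)
  · have h : u8 = ((SA * SA) * RA⁻¹) := Units.ext (by decide)
    exact h ▸ (mul_mem (mul_mem hSA hSA) (inv_mem hRA))
  · have h : u9 = ((RA⁻¹ * SA) * RA⁻¹) := Units.ext (by decide)
    exact h ▸ (mul_mem (mul_mem (inv_mem hRA) hSA) (inv_mem hRA))
  · have h : u10 = ((SA⁻¹ * SA⁻¹) * SA⁻¹) := Units.ext (by decide)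
    exact h ▸ (mul_mem (mul_mem (inv_mem hSA) (inv_mem hSA)) (inv_mem hSA))
  · have h : u11 = (((RA * SA) * RA) * SA) := Units.ext (by decide)
    exact h ▸ (mul_mem (mul_mem (mul_mem hRA hSA) hRA) hSA)
  · have h : u12 = (((RA * SA) * RA⁻¹) * SA⁻¹) := Units.ext (by decide)
    exact h ▸ (mul_mem (mul_mem (mul_mem hRA hSA) (inv_mem hRA)) (inv_mem hSA))
  · have h : u13 = (((SA * RA) * SA) * RA) := Units.ext (by decide)
    exact h ▸ (mul_mem (mul_mem (mul_mem hSA hRA) hSA) hRA)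
  · have h : u14 = (((SA * RA) * SA⁻¹) * RA⁻¹) := Units.ext (by decide)
    exact h ▸ (mul_mem (mul_mem (mul_mem hSA hRA) (inv_mem hSA)) (inv_mem hRA))
  · have h : u15 = (((SA * RA⁻¹) * SA⁻¹) * RA) := Units.ext (by decide)
    exact h ▸ (mul_mem (mul_mem (mul_mem hSA (inv_mem hRA)) (inv_mem hSA)) hRA)
  · have h : u16 = (((RA⁻¹ * SA) * RA) * SA⁻¹) := Units.ext (by decide)
    exact h ▸ (mul_mem (mul_mem (mul_mem (inv_mem hRA) hSA) hRA) (inv_mem hSA))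
  · have h : u17 = (((RA⁻¹ * SA⁻¹) * RA⁻¹) * SA⁻¹) := Units.ext (by decide)
    exact h ▸ (mul_mem (mul_mem (mul_mem (inv_mem hRA) (inv_mem hSA)) (inv_mem hRA)) (inv_mem hSA))
  · have h : u18 = (((SA⁻¹ * RA⁻¹) * SA⁻¹) * RA⁻¹) := Units.ext (by decide)
    exact h ▸ (mul_mem (mul_mem (mul_mem (inv_mem hSA) (inv_mem hRA)) (inv_mem hSA)) (inv_mem hRA))
  · have h : u19 = ((((RA * SA) * SA) * SA) * SA) := Units.ext (by decide)
    exact h ▸ (mul_mem (mul_mem (mul_mem (mul_mem hRA hSA) hSA) hSA) hSA)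
  · have h : u20 = ((((RA * SA⁻¹) * RA⁻¹) * SA⁻¹) * RA) := Units.ext (by decide)
    exact h ▸ (mul_mem (mul_mem (mul_mem (mul_mem hRA (inv_mem hSA)) (inv_mem hRA)) (inv_mem hSA)) hRA)
  · have h : u21 = ((((RA⁻¹ * SA) * RA) * SA) * RA⁻¹) := Units.ext (by decide)
    exact h ▸ (mul_mem (mul_mem (mul_mem (mul_mem (inv_mem hRA) hSA) hRA) hSA) (inv_mem hRA))
  · have h : u22 = ((((RA⁻¹ * SA⁻¹) * SA⁻¹) * SA⁻¹) * SA⁻¹) := Units.ext (by decide)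
    exact h ▸ (mul_mem (mul_mem (mul_mem (mul_mem (inv_mem hRA) (inv_mem hSA)) (inv_mem hSA)) (inv_mem hSA)) (inv_mem hSA))
  · have h : u23 = (((((RA * SA) * RA) * SA) * RA) * SA) := Units.ext (by decide)
    exact h ▸ (mul_mem (mul_mem (mul_mem (mul_mem (mul_mem hRA hSA) hRA) hSA) hRA) hSA)

theorem GA_structure : ∀ x ∈ GA, ∃ h ∈ H0sub, x = h ∨ x = RA * h ∨ x = RA * (RA * h) := by
  obtain ⟨K, hK⟩ := triple_coset H0sub RA S0_r3 (fun h hh => S0_conj h hh)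
  have hle : GA ≤ K := by
    rw [GA, Subgroup.closure_le]
    rintro x (rfl | rfl)
    · exact (hK RA).mpr ⟨1, H0sub.one_mem, Or.inr (Or.inl (mul_one RA).symm)⟩
    · refine (hK SA).mpr ⟨u1, mem_H0sub.mpr (by decide), Or.inr (Or.inr (Units.ext (by decide)))⟩
  exact fun x hx => (hK x).mp (hle hx)

/-! ### the isomorphism with SL(2, ZMod 3) -/

theorem red_det (M : Mat2) : (M.map red).det = red M.det := by
  rw [← pi3_eq, ← RingHom.mapMatrix_apply, ← RingHom.map_det]

def rho : ↥H0sub →* Matrix.SpecialLinearGroup (Fin 2) (ZMod 3) where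
  toFun x := ⟨(x.1 : Mat2).map red, by
    rw [red_det, S0_det' x.1 x.2, ← pi3_eq, map_one]⟩
  map_one' := by
    apply Subtype.ext
    show ((1 : Mu) : Mat2).map red = 1
    rw [Units.val_one, ← pi3_eq, ← RingHom.mapMatrix_apply, map_one]
  map_mul' x y := by
    apply Subtype.ext
    show ((x.1 * y.1 : Mu) : Mat2).map red = ((x.1 : Mat2).map red) * ((y.1 : Mat2).map red)
    rw [Units.val_mul, ← pi3_eq, ← RingHom.mapMatrix_apply, map_mul]
    rfl

theorem rho_bij : Function.Bijective rho := by
  constructor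
  · intro x y h
    have h' : (x.1 : Mat2).map red = (y.1 : Mat2).map red := congrArg Subtype.val h
    exact Subtype.ext (S0_red_inj x.1 x.2 y.1 y.2 h')
  · intro y
    have hdet : y.1 0 0 * y.1 1 1 - y.1 0 1 * y.1 1 0 = 1 := by
      rw [← Matrix.det_fin_two]; exact y.2
    obtain ⟨a, ha, hmap⟩ := S0_red_surj (fun i j => y.1 i j) hdet
    refine ⟨⟨a, ha⟩, Subtype.ext ?_⟩
    show (a : Mat2).map red = y.1
    exact hmap

noncomputable def equivH : ↥H0sub ≃* Matrix.SpecialLinearGroup (Fin 2) (ZMod 3) :=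
  MulEquiv.ofBijective rho rho_bij

theorem card_H0 : Nat.card ↥H0sub = 24 := by
  have e : ↥H0sub ≃ {x : Mu // x ∈ S0} := Equiv.subtypeEquivRight (fun x => mem_H0sub)
  rw [Nat.card_congr e, Nat.card_eq_fintype_card, Fintype.card_coe, S0_card]

/-! ### main theorem -/

theorem G_omega_SL2_part (ω : ℂ) (hω : IsPrimitiveRoot ω 3) :
    Nonempty (↥(G ω ⊓ detOne) ≃* Matrix.SpecialLinearGroup (Fin 2) (ZMod 3)) ∧
    Nat.card ↥(G ω ⊓ detOne) = 24 := by
  have hne : ω ≠ 1 := hω.ne_one (by norm_num)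
  have h3 : ω ^ 3 = 1 := hω.pow_eq_one
  have hω0 : ω ≠ 0 := by
    intro h; rw [h] at h3; norm_num at h3
  have hsq : ω ^ 2 + ω + 1 = 0 := by
    have hfac : (ω - 1) * (ω ^ 2 + ω + 1) = 0 := by linear_combination h3
    rcases mul_eq_zero.mp hfac with h | h
    · exact absurd (sub_eq_zero.mp h) hne
    · exact h
  have hω2ne : ω ^ 2 ≠ 1 := by
    intro h
    have hm2 : ω = -2 := by linear_combination hsq - h
    rw [hm2] at h3; norm_num at h3
  -- the ring hom Eis →+* ℂ
  set φ : Eis →+* ℂ := {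
    toFun := fun x => (x.a : ℂ) + x.b * ω
    map_one' := by simp
    map_zero' := by simp
    map_add' := by intro x y; simp only [Eis.add_a, Eis.add_b]; push_cast; ring
    map_mul' := by
      intro x y
      simp only [Eis.mul_a, Eis.mul_b]
      push_cast
      linear_combination (-(x.b : ℂ) * (y.b : ℂ)) * hsq } with hφdef
  have hφ : ∀ x : Eis, φ x = (x.a : ℂ) + x.b * ω := fun x => rfl
  have hφinj : Function.Injective φ := by
    intro x y hxy
    rw [hφ, hφ] at hxy
    have hb : x.b = y.b := by
      by_contra hb
      have hbcne : ((y.b : ℂ)) - x.b ≠ 0 := by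
        intro h0
        apply hb
        have hxy' : (x.b : ℂ) = y.b := by linear_combination -h0
        exact_mod_cast hxy'
      have hωeq : ω = ((((x.a : ℝ) - y.a) / ((y.b : ℝ) - x.b) : ℝ) : ℂ) := by
        push_cast
        rw [eq_div_iff (by push_cast at hbcne ⊢; exact hbcne)]
        linear_combination -hxy
      set q : ℝ := ((x.a : ℝ) - y.a) / ((y.b : ℝ) - x.b) with hqdef
      have hqc : (q : ℂ) ^ 2 + (q : ℂ) + 1 = 0 := by rw [← hωeq]; exact hsq
      have hqr : q ^ 2 + q + 1 = 0 := by exact_mod_cast hqc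
      nlinarith [sq_nonneg (2 * q + 1)]
    have ha : x.a = y.a := by
      have hac : (x.a : ℂ) = (y.a : ℂ) := by
        have hbc : (x.b : ℂ) * ω = (y.b : ℂ) * ω := by rw [hb]
        linear_combination hxy - hbc
      exact_mod_cast hac
    exact Eis.ext' ha hb
  have hminj : Function.Injective (φ.mapMatrix : Mat2 →+* Matrix (Fin 2) (Fin 2) ℂ) := by
    intro M N h
    have h' : ∀ i j, φ (M i j) = φ (N i j) := by
      intro i j
      have := congrFun (congrFun (congrArg (fun m : Matrix (Fin 2) (Fin 2) ℂ => (m : Fin 2 → Fin 2 → ℂ)) h) i) j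
      simpa [RingHom.mapMatrix_apply, Matrix.map_apply] using this
    exact Matrix.ext fun i j => hφinj (h' i j)
  set Φ : Mu →* Matrix.GeneralLinearGroup (Fin 2) ℂ := Units.map φ.mapMatrix.toMonoidHom with hΦdef
  have hΦinj : Function.Injective Φ := Units.map_injective hminj
  have hcoe : ∀ x : Mu, ((Φ x : Matrix.GeneralLinearGroup (Fin 2) ℂ) : Matrix (Fin 2) (Fin 2) ℂ)
      = (x : Mat2).map φ := fun x => rfl
  have hRAim : ((Φ RA : Matrix.GeneralLinearGroup (Fin 2) ℂ) : Matrix (Fin 2) (Fin 2) ℂ) = Rmat ω := by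
    rw [hcoe]
    unfold Rmat RA
    ext i j
    fin_cases i <;> fin_cases j <;>
      simp [Matrix.map_apply, hφ, w] <;> norm_num [hφ]
  have hSAim : ((Φ SA : Matrix.GeneralLinearGroup (Fin 2) ℂ) : Matrix (Fin 2) (Fin 2) ℂ) = Smat ω := by
    have hinv : -ω⁻¹ = 1 + ω := by
      field_simp
      linear_combination -hsq
    rw [hcoe]
    unfold Smat SA
    ext i j
    fin_cases i <;> fin_cases j <;>
      simp [Matrix.map_apply, hφ, hinv] <;> norm_num [hφ]
  have hmapG : Subgroup.map Φ GA = G ω := by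
    rw [GA, G, MonoidHom.map_closure, Set.image_pair]
    congr 1
    ext u
    simp only [Set.mem_insert_iff, Set.mem_singleton_iff, Set.mem_setOf_eq]
    constructor
    · rintro (rfl | rfl)
      · exact Or.inl hRAim
      · exact Or.inr hSAim
    · rintro (h | h)
      · exact Or.inl (Units.ext (h.trans hRAim.symm))
      · exact Or.inr (Units.ext (h.trans hSAim.symm))
  have hdetΦ : ∀ x : Mu, ((Φ x : Matrix.GeneralLinearGroup (Fin 2) ℂ) : Matrix (Fin 2) (Fin 2) ℂ).det
      = φ ((x : Mat2).det) := by
    intro x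
    rw [hcoe, ← RingHom.mapMatrix_apply, RingHom.map_det]
  have hφw : φ w = ω := by rw [hφ]; show (0 : ℤ) + (1 : ℤ) * ω = ω; push_cast; ring
  have hfin : G ω ⊓ detOne = Subgroup.map Φ H0sub := by
    ext y
    constructor
    · rintro ⟨hyG, hydet⟩
      rw [← hmapG] at hyG
      obtain ⟨x, hxGA, rfl⟩ := hyG
      have hydet' : ((Φ x : Matrix.GeneralLinearGroup (Fin 2) ℂ) : Matrix (Fin 2) (Fin 2) ℂ).det = 1 := hydet
      rw [hdetΦ] at hydet'
      obtain ⟨h, hh, hcase⟩ := GA_structure x hxGA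
      rcases hcase with hce | hce | hce
      · exact ⟨h, hh, by rw [hce]⟩
      · exfalso
        rw [hce, Units.val_mul, Matrix.det_mul, detRA, S0_det' h hh, mul_one, hφw] at hydet'
        exact hne hydet'
      · exfalso
        rw [hce, Units.val_mul, Matrix.det_mul, Units.val_mul, Matrix.det_mul, detRA,
          S0_det' h hh, mul_one, map_mul, hφw] at hydet'
        exact hω2ne (by rw [sq]; exact hydet')
    · rintro ⟨x, hx, rfl⟩
      refine ⟨?_, ?_⟩
      · rw [← hmapG]; exact ⟨x, H0_le_GA hx, rfl⟩
      · show ((Φ x : Matrix.GeneralLinearGroup (Fin 2) ℂ) : Matrix (Fin 2) (Fin 2) ℂ).det = 1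
        rw [hdetΦ, S0_det' x hx, map_one]
  have e1 : ↥(G ω ⊓ detOne) ≃* ↥(Subgroup.map Φ H0sub) := MulEquiv.subgroupCongr hfin
  have e2 : ↥H0sub ≃* ↥(Subgroup.map Φ H0sub) := Subgroup.equivMapOfInjective H0sub Φ hΦinj
  refine ⟨⟨(e1.trans e2.symm).trans equivH⟩, ?_⟩
  rw [Nat.card_congr (e1.trans e2.symm).toEquiv, card_H0]
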